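/- arXiv:1210.3146 — 2 statements merged into one kernel-verified Lean document; each statement's English description precedes it below -/
import Mathlib

section
/- Let w be an A-strict episturmian word over a finite alphabet A with |A| ≥ 2. Then the privileged complexity of w satisfies A_n(w) = 1 for all even n ≥ 0 and A_n(w) = |A| for all odd n ≥ 1. -/
/-- Number of occurrences of `u` as a factor of `w` (positions are 0-indexed). -/
noncomputable def occCount {A : Type*} (u w : List A) : ℕ :=
  Set.ncard {i : ℕ | i + u.length ≤ w.length ∧ (w.drop i).take u.length = u}

/-- `v` is a complete first return to `u`: `u` is a prefix and a suffix of `v`,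
and `u` has exactly two occurrences in `v`. -/
def IsCompleteFirstReturn {A : Type*} (v u : List A) : Prop :=
  u <+: v ∧ u <:+ v ∧ occCount u v = 2

/-- Privileged words: the empty word and the single letters are privileged, and a word of
length at least 2 is privileged if it is a complete first return to a shorter privileged word. -/
inductive Privileged {A : Type*} : List A → Prop where
  | nil : Privileged ([] : List A)
  | single (a : A) : Privileged [a]
  | ret (w u : List A) : 2 ≤ w.length → u.length < w.length → Privileged u →
      IsCompleteFirstReturn w u → Privileged w

/-- A complete return word: a complete first return to some word
(the empty word counted by convention; letters are complete first returns to the empty word). -/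
def IsCompleteReturnWord {A : Type*} (v : List A) : Prop :=
  v = [] ∨ ∃ u : List A, IsCompleteFirstReturn v u

/-- Position `i` of `w` (1-based, `1 ≤ i ≤ |w|`) introduces the factor `u`:
`u` occurs in `w` ending at position `i` and `u` occurs exactly once in the prefix `w[1,i]`. -/
def Introduces {A : Type*} (w : List A) (i : ℕ) (u : List A) : Prop :=
  1 ≤ i ∧ i ≤ w.length ∧ u <:+ w.take i ∧ occCount u (w.take i) = 1

/-- A finite word is rich if it has exactly `|w| + 1` distinct palindromic factors. -/
noncomputable def RichWord {A : Type*} (w : List A) : Prop :=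
  Set.ncard {u : List A | u <:+: w ∧ u.reverse = u} = w.length + 1

/-- `u` is a (finite) factor of the infinite word `w`. -/
def IsFactorInf {A : Type*} (w : ℕ → A) (u : List A) : Prop :=
  ∃ i : ℕ, u = (List.range u.length).map fun k => w (i + k)

/-- A Q-property of finite words. -/
structure IsQProperty {A : Type*} (Q : List A → Prop) : Prop where
  q_nil : Q []
  q_single : ∀ a : A, Q [a]
  ends_at_every_position : ∀ (w : List A) (i : ℕ), 1 ≤ i → i ≤ w.length →
    ∃ u : List A, u ≠ [] ∧ u <:+ w.take i ∧ Q u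
  introduces_at_most_one : ∀ (w : List A) (i : ℕ) (u v : List A),
    Introduces w i u → Introduces w i v → Q u → Q v → u = v

/-- Q-complexity of an infinite word: the number of distinct factors of length `n`
having property `Q`. -/
noncomputable def qComplexityInf {A : Type*} (w : ℕ → A) (Q : List A → Prop) (n : ℕ) : ℕ :=
  Set.ncard {u : List A | IsFactorInf w u ∧ Q u ∧ u.length = n}

/-- Privileged complexity of an infinite word. -/
noncomputable def privComplexityInf {A : Type*} (w : ℕ → A) (n : ℕ) : ℕ :=
  Set.ncard {u : List A | IsFactorInf w u ∧ Privileged u ∧ u.length = n}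

/-- Palindromic complexity of an infinite word. -/
noncomputable def palComplexityInf {A : Type*} (w : ℕ → A) (n : ℕ) : ℕ :=
  Set.ncard {u : List A | IsFactorInf w u ∧ u.reverse = u ∧ u.length = n}

/-- An infinite word is ultimately periodic if it is of the form `u v v v ⋯`
with `v` nonempty. -/
def UltimatelyPeriodic {A : Type*} (w : ℕ → A) : Prop :=
  ∃ u v : List A, v ≠ [] ∧ ∀ n : ℕ, w n =
    if n < u.length then u.getD n (w 0)
    else v.getD ((n - u.length) % v.length) (w 0)

/-- An infinite word is Sturmian if it has exactly `n + 1` distinct factors of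
length `n` for every `n`. -/
def Sturmian {A : Type*} (w : ℕ → A) : Prop :=
  ∀ n : ℕ, Set.ncard {u : List A | IsFactorInf w u ∧ u.length = n} = n + 1

/-- A finite binary word is balanced: its set of factors is balanced. -/
def BalancedWord (x : List Bool) : Prop :=
  ∀ u v : List Bool, u <:+: x → v <:+: x → u.length = v.length →
    ((u.count true : ℤ) - (v.count true : ℤ)).natAbs ≤ 1

/-- `u` is a right special factor of the infinite word `w`. -/
def RightSpecial {A : Type*} (w : ℕ → A) (u : List A) : Prop :=
  ∃ a b : A, a ≠ b ∧ IsFactorInf w (u ++ [a]) ∧ IsFactorInf w (u ++ [b])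

/-- The Thue-Morse word: the `n`-th letter is the parity of the number of ones in the
binary expansion of `n` (`false` = 0, `true` = 1). -/
def thueMorse (n : ℕ) : Bool := (Nat.digits 2 n).count 1 % 2 == 1

/-!
Privileged factors of a strict episturmian word are exactly its palindromic factors, and the
palindromic factors are counted by observing that every palindromic factor `p` extends to a
factor `a p a` for exactly one letter `a` (the unique right special factor of each length decides
which).

The key step is that a factor `v` which is a complete first return to a palindrome `u` is a
palindrome, by induction on `|v|`. Write `u = c q c`. If `q` is not right special, every occurrence
of `q` is flanked by `c` on both sides, so removing the outer letters of `v` leaves a complete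
first return to `q`. Otherwise `u` without its last letter is right special. If `v` were not a
palindrome, the longest common prefix `z` of `v` and its reverse would be right special, so `z c`
would be a shorter complete first return to `u`, hence a palindrome `c ρ c`; the two-sided
extensions of `ρ` all meet `c`, and removing the outer letters of `v` leaves a complete first
return to `ρ`, making `v` a palindrome after all.

Conversely, a palindrome is a complete first return to its longest proper palindromic prefix.
-/

section Occurrences

variable {α : Type*} {u v x y z : List α} {c : α} {i n : ℕ}

def OccursAt (u v : List α) (i : ℕ) : Prop :=
  ∃ p s, v = p ++ u ++ s ∧ p.length = i

theorem occursAt_iff :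
    OccursAt u v i ↔ i + u.length ≤ v.length ∧ (v.drop i).take u.length = u := by
  constructor
  · rintro ⟨p, s, rfl, rfl⟩
    simp
  · rintro ⟨hle, htake⟩
    refine ⟨v.take i, v.drop (i + u.length), ?_, by simp; omega⟩
    conv_lhs => rw [← List.take_append_drop i v, ← List.take_append_drop u.length (v.drop i)]
    rw [htake, List.drop_drop, List.append_assoc]

theorem OccursAt.add_length_le (h : OccursAt u v i) : i + u.length ≤ v.length :=
  (occursAt_iff.1 h).1

theorem occursAt_zero_iff : OccursAt u v 0 ↔ u <+: v := by
  constructor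
  · rintro ⟨p, s, rfl, hp⟩
    simp [List.length_eq_zero_iff.1 hp]
  · rintro ⟨s, rfl⟩
    exact ⟨[], s, by simp, rfl⟩

theorem OccursAt.trans (h : OccursAt x v i) (h' : OccursAt y x n) : OccursAt y v (i + n) := by
  obtain ⟨p, s, rfl, rfl⟩ := h
  obtain ⟨p', s', rfl, rfl⟩ := h'
  exact ⟨p ++ p', s' ++ s, by simp, by simp⟩

theorem OccursAt.of_prefix (h : OccursAt x v i) (hy : y <+: x) : OccursAt y v i :=
  h.trans (occursAt_zero_iff.2 hy)

theorem List.IsSuffix.occursAt (h : u <:+ v) : OccursAt u v (v.length - u.length) := by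
  obtain ⟨p, rfl⟩ := h
  exact ⟨p, [], by simp, by simp⟩

theorem OccursAt.of_suffix (h : OccursAt x v i) (hy : y <:+ x) :
    OccursAt y v (i + (x.length - y.length)) :=
  h.trans hy.occursAt

theorem OccursAt.isSuffix (h : OccursAt u v i) (hi : i + u.length = v.length) : u <:+ v := by
  obtain ⟨p, s, rfl, rfl⟩ := h
  obtain rfl : s = [] := List.length_eq_zero_iff.1 (by simp only [List.length_append] at hi; omega)
  exact ⟨p, by simp⟩

theorem occursAt_iff_of_prefix (hz : z <+: v) :
    OccursAt u z i ↔ OccursAt u v i ∧ i + u.length ≤ z.length := by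
  obtain ⟨t, rfl⟩ := hz
  refine ⟨fun h => ⟨?_, h.add_length_le⟩, fun ⟨h, hle⟩ => ?_⟩
  · obtain ⟨p, s, rfl, rfl⟩ := h
    exact ⟨p, s ++ t, by simp, rfl⟩
  · rw [occursAt_iff] at h ⊢
    refine ⟨hle, ?_⟩
    rw [List.drop_append_of_le_length (by omega),
      List.take_append_of_le_length (by simp only [List.length_drop]; omega)] at h
    exact h.2

theorem OccursAt.exists_cons_append {a b : α} (h : OccursAt u v i) :
    ∃ e f, OccursAt ([e] ++ u ++ [f]) ([a] ++ v ++ [b]) i := by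
  obtain ⟨p, s, rfl, rfl⟩ := h
  obtain ⟨p', e, hp⟩ : ∃ p' e, a :: p = p' ++ [e] :=
    ⟨(a :: p).dropLast, _, (List.dropLast_append_getLast (List.cons_ne_nil a p)).symm⟩
  obtain ⟨f, s', hs⟩ : ∃ f s', s ++ [b] = f :: s' :=
    List.exists_cons_of_ne_nil (by simp)
  refine ⟨e, f, p', s', ?_, ?_⟩
  · calc [a] ++ (p ++ u ++ s) ++ [b] = (a :: p) ++ u ++ (s ++ [b]) := by simp
      _ = p' ++ ([e] ++ u ++ [f]) ++ s' := by rw [hp, hs]; simp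
  · have := congrArg List.length hp
    simp only [List.length_cons, List.length_append, List.length_nil] at this
    omega

theorem OccursAt.isInfix (h : OccursAt u v i) : u <:+: v := by
  obtain ⟨p, s, rfl, -⟩ := h
  exact ⟨p, s, rfl⟩

theorem occCount_eq_ncard (u v : List α) : occCount u v = {i | OccursAt u v i}.ncard := by
  simp only [occCount, occursAt_iff]

theorem isCompleteFirstReturn_iff : IsCompleteFirstReturn v u ↔
    u.length < v.length ∧ u <+: v ∧ u <:+ v ∧
      ∀ i, OccursAt u v i → i = 0 ∨ i = v.length - u.length := by
  have hfin : {i | OccursAt u v i}.Finite :=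
    (Set.finite_Iic v.length).subset fun i hi => by
      have := hi.add_length_le
      simp only [Set.mem_Iic]
      omega
  have hsub : u <+: v → u <:+ v → {0, v.length - u.length} ⊆ {i | OccursAt u v i} := by
    rintro hp hs i (rfl | rfl)
    exacts [occursAt_zero_iff.2 hp, hs.occursAt]
  rw [IsCompleteFirstReturn, occCount_eq_ncard]
  constructor
  · rintro ⟨hp, hs, hcount⟩
    have hlt : u.length < v.length := by
      by_contra hle
      have hsingle : {i | OccursAt u v i} ⊆ {0} := fun i hi => by
        have := hi.add_length_le
        simp only [Set.mem_singleton_iff]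
        omega
      have := Set.ncard_le_ncard hsingle
      simp only [Set.ncard_singleton] at this
      omega
    have heq := Set.eq_of_subset_of_ncard_le (hsub hp hs)
      (by rw [hcount, Set.ncard_pair (by omega)]) hfin
    refine ⟨hlt, hp, hs, fun i hi => ?_⟩
    have hi : i ∈ ({0, v.length - u.length} : Set ℕ) := heq ▸ hi
    simpa using hi
  · rintro ⟨hlt, hp, hs, hocc⟩
    have heq : {i | OccursAt u v i} = {0, v.length - u.length} :=
      (Set.Subset.antisymm (fun i hi => by simpa using hocc i hi) (hsub hp hs))
    exact ⟨hp, hs, by rw [heq, Set.ncard_pair (by omega)]⟩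

theorem IsCompleteFirstReturn.length_lt (h : IsCompleteFirstReturn v u) : u.length < v.length :=
  (isCompleteFirstReturn_iff.1 h).1

theorem exists_isCompleteFirstReturn_prefix (hpre : u <+: v) (hsuf : u <:+ v)
    (hlt : u.length < v.length) : ∃ r, r <+: v ∧ IsCompleteFirstReturn r u := by
  classical
  have hex : ∃ n, u.length < n ∧ u <:+ v.take n := ⟨v.length, hlt, by simpa⟩
  obtain ⟨hn, hnsuf⟩ := Nat.find_spec hex
  have hnv : Nat.find hex ≤ v.length := Nat.find_min' hex ⟨hlt, by simpa⟩
  refine ⟨v.take (Nat.find hex), List.take_prefix _ _, isCompleteFirstReturn_iff.2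
    ⟨by simp only [List.length_take]; omega, List.prefix_take_iff.2 ⟨hpre, hn.le⟩, hnsuf,
      fun i hi => ?_⟩⟩
  have hvi := (occursAt_iff_of_prefix (List.take_prefix _ v)).1 hi
  simp only [List.length_take] at hvi ⊢
  by_contra hne
  refine Nat.find_min hex (m := i + u.length) (by omega) ⟨by omega, ?_⟩
  exact ((occursAt_iff_of_prefix (List.take_prefix _ v)).2 ⟨hvi.1, by simp; omega⟩).isSuffix
    (by simp; omega)

theorem IsCompleteFirstReturn.append_singleton (h : IsCompleteFirstReturn v u) (hz : z <+: v)
    (hlt : z.length < v.length) (hpre : u <+: z) (hsuf : u <:+ z ++ [c]) :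
    IsCompleteFirstReturn (z ++ [c]) u := by
  obtain ⟨-, -, -, hocc⟩ := isCompleteFirstReturn_iff.1 h
  have hzc := List.prefix_append z [c]
  refine isCompleteFirstReturn_iff.2 ⟨?_, hpre.trans hzc, hsuf, fun i hi => ?_⟩
  · simpa using Nat.lt_succ_of_le hpre.length_le
  have hi' := hi.add_length_le
  simp only [List.length_append, List.length_singleton] at hi' ⊢
  by_cases hend : i + u.length = z.length + 1
  · omega
  have hz' := (occursAt_iff_of_prefix hzc).2 ⟨hi, by omega⟩
  have := hz'.add_length_le
  rcases hocc i ((occursAt_iff_of_prefix hz).1 hz').1 with h0 | hd <;> omega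

theorem IsCompleteFirstReturn.trim {q : List α}
    (h : IsCompleteFirstReturn ([c] ++ v ++ [c]) ([c] ++ q ++ [c]))
    (hext : ∀ e f, [e] ++ q ++ [f] <:+: [c] ++ v ++ [c] → e = c ∧ f = c) :
    IsCompleteFirstReturn v q := by
  obtain ⟨hlt, hp, hs, hocc⟩ := isCompleteFirstReturn_iff.1 h
  simp only [List.length_append, List.length_singleton] at hlt hocc
  refine isCompleteFirstReturn_iff.2 ⟨by omega, ?_, ?_, fun i hi => ?_⟩
  · rw [List.append_assoc, List.append_assoc, List.prefix_self_append_iff] at hp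
    exact List.prefix_of_prefix_length_le ((List.prefix_append q [c]).trans hp)
      (List.prefix_append v [c]) (by omega)
  · rw [List.suffix_append_self_iff] at hs
    exact List.suffix_of_suffix_length_le ((List.suffix_append [c] q).trans hs)
      (List.suffix_append [c] v) (by omega)
  · obtain ⟨e, f, hef⟩ := hi.exists_cons_append (a := c) (b := c)
    obtain ⟨rfl, rfl⟩ := hext e f hef.isInfix
    rcases hocc i hef with h0 | hd <;> omega

theorem IsCompleteFirstReturn.trim_of_isPrefix_cons {ρ : List α}
    (h : IsCompleteFirstReturn ([c] ++ v ++ [c]) u)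
    (hpre : u <+: c :: ρ) (hsuf : u <:+ ρ ++ [c]) (hρpre : ρ <+: v) (hρsuf : ρ <:+ v)
    (hlt : ρ.length < v.length)
    (hext : ∀ e f, [e] ++ ρ ++ [f] <:+: [c] ++ v ++ [c] → e = c ∨ f = c) :
    IsCompleteFirstReturn v ρ := by
  obtain ⟨-, -, -, hocc⟩ := isCompleteFirstReturn_iff.1 h
  refine isCompleteFirstReturn_iff.2 ⟨hlt, hρpre, hρsuf, fun i hi => ?_⟩
  obtain ⟨e, f, hef⟩ := hi.exists_cons_append (a := c) (b := c)
  have hb := hef.add_length_le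
  have hu₁ := hpre.length_le
  have hu₂ := hsuf.length_le
  simp only [List.length_append, List.length_cons] at hb hocc hu₁ hu₂ ⊢
  rcases hext e f hef.isInfix with rfl | rfl
  · rcases hocc i (hef.of_prefix (hpre.trans (by simp))) with h0 | hd <;> omega
  · have := hocc _ (hef.of_suffix (hsuf.trans (List.suffix_append [e] (ρ ++ [f]))))
    simp only [List.length_append, List.length_singleton] at this
    omega

end Occurrences

section Palindromes

variable {α : Type*} {u v z : List α} {c : α}

theorem exists_eq_append_of_reverse_eq (hu : u.reverse = u) (h : 2 ≤ u.length) :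
    ∃ c m, u = [c] ++ m ++ [c] ∧ m.reverse = m := by
  cases List.Palindrome.of_reverse_eq hu with
  | nil => simp at h
  | singleton => simp at h
  | cons_concat c hm => exact ⟨c, _, rfl, hm.reverse_eq⟩

theorem exists_eq_cons_of_reverse_eq (hz : z ≠ []) (h : (z ++ [c]).reverse = z ++ [c]) :
    ∃ ρ, z = c :: ρ ∧ ρ.reverse = ρ := by
  obtain ⟨x, ρ, rfl⟩ := List.exists_cons_of_ne_nil hz
  obtain ⟨rfl, hρ, -⟩ : c = x ∧ ρ.reverse = ρ ∧ x = c := by simpa using h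
  exact ⟨ρ, rfl, hρ⟩

theorem exists_eq_append_of_prefix_of_suffix (hp : [c] <+: v) (hs : [c] <:+ v)
    (h : 2 ≤ v.length) : ∃ v', v = [c] ++ v' ++ [c] := by
  obtain ⟨t, rfl⟩ := hp
  obtain ⟨t', d, rfl⟩ := (List.eq_nil_or_concat t).resolve_left (by rintro rfl; simp at h)
  obtain rfl : c = d := by simpa using hs
  exact ⟨t', by simp⟩

theorem exists_common_prefix_of_ne : ∀ {l₁ l₂ : List α}, l₁.length = l₂.length → l₁ ≠ l₂ →
    ∃ z a b, a ≠ b ∧ z ++ [a] <+: l₁ ∧ z ++ [b] <+: l₂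
  | [], [], _, h => absurd rfl h
  | a :: l₁, b :: l₂, hl, h => by
    by_cases hab : a = b
    · subst hab
      obtain ⟨z, x, y, hxy, h₁, h₂⟩ :=
        exists_common_prefix_of_ne (by simpa using hl) (by simpa using h)
      exact ⟨a :: z, x, y, hxy, by simpa, by simpa⟩
    · exact ⟨[], a, b, hab, by simp, by simp⟩

theorem exists_common_prefix_reverse (hne : ([c] ++ v ++ [c]).reverse ≠ [c] ++ v ++ [c])
    (hu : u.reverse = u) (hpre : u <+: [c] ++ v ++ [c]) (hsuf : u <:+ [c] ++ v ++ [c]) :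
    ∃ z a b, a ≠ b ∧ z ++ [a] <+: [c] ++ v ++ [c] ∧ z ++ [b] <+: ([c] ++ v ++ [c]).reverse ∧
      u <+: z ∧ z.length ≤ v.length := by
  obtain ⟨z, a, b, hab, hza, hzb⟩ :=
    exists_common_prefix_of_ne List.length_reverse.symm (Ne.symm hne)
  have hpre' : u <+: ([c] ++ v ++ [c]).reverse := by
    rw [← hu]
    exact List.reverse_prefix.2 hsuf
  have hza' := hza.length_le
  have hzb' := hzb.length_le
  simp only [List.length_append, List.length_singleton, List.length_reverse] at hza' hzb'
  refine ⟨z, a, b, hab, hza, hzb, ?_, ?_⟩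
  · by_contra hnz
    have hle : z.length + 1 ≤ u.length := by
      by_contra hle
      exact hnz (List.prefix_of_prefix_length_le hpre ((List.prefix_append z [a]).trans hza)
        (by omega))
    have h₁ := List.prefix_of_prefix_length_le hza hpre (by simpa using hle)
    have h₂ := List.prefix_of_prefix_length_le hzb hpre' (by simpa using hle)
    have h₃ := List.prefix_of_prefix_length_le h₁ h₂ (by simp)
    exact hab (by simpa using h₃.eq_of_length (by simp))
  · by_contra hlen
    have h₁ := hza.eq_of_length (by simp only [List.length_append, List.length_singleton]; omega)
    have h₂ := hzb.eq_of_length (by simp; omega)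
    rw [show ([c] ++ v ++ [c]).reverse = [c] ++ v.reverse ++ [c] by simp] at h₂
    have ha : a = c := by simpa using (List.append_inj' h₁ rfl).2
    have hb : b = c := by simpa using (List.append_inj' h₂ rfl).2
    exact hab (ha.trans hb.symm)

theorem exists_longest_palindromic_prefix (hu : u ≠ []) :
    ∃ q, q <+: u ∧ q.reverse = q ∧ q.length < u.length ∧
      ∀ r, r <+: u → r.reverse = r → r.length < u.length → r.length ≤ q.length := by
  classical
  let P : ℕ → Prop := fun j => (u.take j).reverse = u.take j
  have hlen := List.length_pos_iff.2 hu
  have hle := Nat.findGreatest_le (P := P) (u.length - 1)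
  refine ⟨u.take (Nat.findGreatest P (u.length - 1)), List.take_prefix _ _,
    Nat.findGreatest_spec (P := P) (Nat.zero_le _) (by simp [P]), by simp; omega,
    fun r hr hrp hrl => ?_⟩
  have := Nat.le_findGreatest (P := P) (show r.length ≤ u.length - 1 by omega)
    (by simpa [P, ← List.prefix_iff_eq_take.1 hr] using hrp)
  simp only [List.length_take]
  omega

end Palindromes

section Factors

variable {A : Type*} {w : ℕ → A} {u v : List A}

theorem isFactorInf_iff_range' : IsFactorInf w u ↔ ∃ i, u = (List.range' i u.length).map w := by
  simp [IsFactorInf, List.range'_eq_map_range, List.map_map, Function.comp_def]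

theorem IsFactorInf.of_infix (hv : IsFactorInf w v) (h : u <:+: v) : IsFactorInf w u := by
  obtain ⟨p, s, rfl⟩ := h
  obtain ⟨i, hi⟩ := isFactorInf_iff_range'.1 hv
  simp only [List.length_append, ← List.range'_append_1, List.map_append] at hi
  obtain ⟨h₁, -⟩ := List.append_inj hi (by simp)
  exact isFactorInf_iff_range'.2 ⟨i + p.length, (List.append_inj h₁ (by simp)).2⟩

theorem IsFactorInf.of_prefix (hv : IsFactorInf w v) (h : u <+: v) : IsFactorInf w u :=
  hv.of_infix h.isInfix

theorem IsFactorInf.of_suffix (hv : IsFactorInf w v) (h : u <:+ v) : IsFactorInf w u :=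
  hv.of_infix h.isInfix

theorem IsFactorInf.exists_append_singleton (hu : IsFactorInf w u) :
    ∃ f, IsFactorInf w (u ++ [f]) := by
  obtain ⟨i, hi⟩ := isFactorInf_iff_range'.1 hu
  refine ⟨w (i + u.length), isFactorInf_iff_range'.2 ⟨i, ?_⟩⟩
  rw [List.length_append, List.length_singleton, List.range'_concat]
  conv_lhs => rw [hi]
  simp

theorem RightSpecial.of_suffix (hu : RightSpecial w u) (h : v <:+ u) : RightSpecial w v := by
  obtain ⟨a, b, hab, ha, hb⟩ := hu
  exact ⟨a, b, hab, ha.of_suffix (List.suffix_append_self_iff.2 h),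
    hb.of_suffix (List.suffix_append_self_iff.2 h)⟩

theorem isFactorInf_nil (w : ℕ → A) : IsFactorInf w [] := ⟨0, rfl⟩

theorem palComplexityInf_zero (w : ℕ → A) : palComplexityInf w 0 = 1 := by
  rw [palComplexityInf, Set.ncard_eq_one]
  refine ⟨[], Set.ext fun u => ?_⟩
  simp only [Set.mem_ofPred_eq, Set.mem_singleton_iff, List.length_eq_zero_iff]
  exact ⟨fun h => h.2.2, by rintro rfl; exact ⟨isFactorInf_nil w, rfl, rfl⟩⟩

end Factors

structure IsStrictEpisturmian {A : Type*} (w : ℕ → A) : Prop where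
  isFactorInf_reverse : ∀ u, IsFactorInf w u → IsFactorInf w u.reverse
  exists_unique_rightSpecial : ∀ n, ∃ u : List A, u.length = n ∧ RightSpecial w u ∧
    (∀ v : List A, v.length = n → RightSpecial w v → v = u) ∧ ∀ a, IsFactorInf w (u ++ [a])

namespace IsStrictEpisturmian

variable {A : Type*} {w : ℕ → A} (hw : IsStrictEpisturmian w) {p q u v : List A} {a b c e f : A}
include hw

theorem exists_rightSpecial (n : ℕ) : ∃ u : List A, u.length = n ∧ RightSpecial w u :=
  let ⟨u, hu, hrs, _⟩ := hw.exists_unique_rightSpecial n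
  ⟨u, hu, hrs⟩

theorem eq_of_rightSpecial (hu : RightSpecial w u) (hv : RightSpecial w v)
    (h : u.length = v.length) : u = v := by
  obtain ⟨r, -, -, huniq, -⟩ := hw.exists_unique_rightSpecial v.length
  rw [huniq u h hu, huniq v rfl hv]

theorem isFactorInf_append_singleton (hu : RightSpecial w u) (a : A) :
    IsFactorInf w (u ++ [a]) := by
  obtain ⟨r, -, -, huniq, hext⟩ := hw.exists_unique_rightSpecial u.length
  rw [huniq u rfl hu]
  exact hext a

theorem rightSpecial_nil : RightSpecial w [] := by
  obtain ⟨u, hu, hrs⟩ := hw.exists_rightSpecial 0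
  rwa [List.length_eq_zero_iff.1 hu] at hrs

theorem isFactorInf_singleton (a : A) : IsFactorInf w [a] :=
  hw.isFactorInf_append_singleton hw.rightSpecial_nil a

theorem exists_cons_append (hu : IsFactorInf w u) : ∃ e f, IsFactorInf w ([e] ++ u ++ [f]) := by
  obtain ⟨e, he⟩ := (hw.isFactorInf_reverse _ hu).exists_append_singleton
  obtain ⟨f, hf⟩ := (hw.isFactorInf_reverse _ he).exists_append_singleton
  exact ⟨e, f, by simpa using hf⟩

theorem exists_cons_rightSpecial (hp : RightSpecial w p) : ∃ c, RightSpecial w (c :: p) := by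
  obtain ⟨r, hr, hrs⟩ := hw.exists_rightSpecial (p.length + 1)
  obtain ⟨c, t, rfl⟩ := List.exists_cons_of_ne_nil (show r ≠ [] by rintro rfl; simp at hr)
  refine ⟨c, ?_⟩
  rwa [hw.eq_of_rightSpecial (hrs.of_suffix (List.suffix_cons c t)) hp (by simpa using hr)] at hrs

theorem eq_or_eq_of_rightSpecial_cons (hp : p.reverse = p) (hc : RightSpecial w (c :: p))
    (hef : IsFactorInf w ([e] ++ p ++ [f])) : e = c ∨ f = c := by
  by_contra! hne
  -- otherwise `f :: p` would be a second right special factor of length `|p| + 1`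
  have hfc : IsFactorInf w (f :: p ++ [c]) := by
    simpa [hp] using hw.isFactorInf_reverse _ (hw.isFactorInf_append_singleton hc f)
  have hfe : IsFactorInf w (f :: p ++ [e]) := by simpa [hp] using hw.isFactorInf_reverse _ hef
  exact hne.2 (List.head_eq_of_cons_eq
    (hw.eq_of_rightSpecial ⟨c, e, hne.1.symm, hfc, hfe⟩ hc rfl))

theorem eq_and_eq_of_not_rightSpecial (hq : q.reverse = q) (hqrs : ¬ RightSpecial w q)
    (hc : IsFactorInf w (q ++ [c])) (hef : IsFactorInf w ([e] ++ q ++ [f])) : e = c ∧ f = c := by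
  have hext : ∀ {a}, IsFactorInf w (q ++ [a]) → a = c := fun {a} ha => by
    by_contra hne
    exact hqrs ⟨a, c, hne, ha, hc⟩
  refine ⟨hext ?_, hext (hef.of_suffix (by simp))⟩
  simpa [hq] using hw.isFactorInf_reverse _ (hef.of_prefix (List.prefix_append ([e] ++ q) [f]))

theorem exists_palindromic_extension (hp : p.reverse = p) (hf : IsFactorInf w p) :
    ∃ a, IsFactorInf w ([a] ++ p ++ [a]) := by
  by_cases hrs : RightSpecial w p
  · obtain ⟨c, hc⟩ := hw.exists_cons_rightSpecial hrs
    exact ⟨c, hw.isFactorInf_append_singleton hc c⟩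
  · obtain ⟨e, f, hef⟩ := hw.exists_cons_append hf
    have hpf : IsFactorInf w (p ++ [f]) := hef.of_suffix (List.suffix_append [e] (p ++ [f]))
    obtain ⟨rfl, -⟩ := hw.eq_and_eq_of_not_rightSpecial hp hrs hpf hef
    exact ⟨e, hef⟩

theorem palindromic_extension_unique (hp : p.reverse = p)
    (ha : IsFactorInf w ([a] ++ p ++ [a])) (hb : IsFactorInf w ([b] ++ p ++ [b])) : a = b := by
  by_cases hrs : RightSpecial w p
  · obtain ⟨c, hc⟩ := hw.exists_cons_rightSpecial hrs
    rw [or_self_iff.1 (hw.eq_or_eq_of_rightSpecial_cons hp hc ha),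
      or_self_iff.1 (hw.eq_or_eq_of_rightSpecial_cons hp hc hb)]
  · exact (hw.eq_and_eq_of_not_rightSpecial hp hrs (ha.of_suffix (by simp)) hb).1.symm

theorem reverse_eq_of_isCompleteFirstReturn_of_rightSpecial
    (ih : ∀ u' v' : List A, v'.length < v.length → IsFactorInf w v' → u'.reverse = u' →
      IsCompleteFirstReturn v' u' → v'.reverse = v')
    (hv : IsFactorInf w v) (hu : (p ++ [c]).reverse = p ++ [c]) (hp : RightSpecial w p)
    (h : IsCompleteFirstReturn v (p ++ [c])) : v.reverse = v := by
  obtain ⟨hlt, hpre, hsuf, -⟩ := isCompleteFirstReturn_iff.1 h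
  have hcu : [c] <+: p ++ [c] := by rw [← hu]; simp
  obtain ⟨v, rfl⟩ := exists_eq_append_of_prefix_of_suffix (hcu.trans hpre)
    ((List.suffix_append p [c]).trans hsuf) (by simp at hlt ⊢; omega)
  by_contra hne
  obtain ⟨z, a, b, hab, hza, hzb, hpz, hzlen⟩ := exists_common_prefix_reverse hne hu hpre hsuf
  have hzrs : RightSpecial w z :=
    ⟨a, b, hab, hv.of_prefix hza, (hw.isFactorInf_reverse _ hv).of_prefix hzb⟩
  have hpzlen : p.length + 1 ≤ z.length := by simpa using hpz.length_le
  have hpz' : p <:+ z := by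
    have hs := z.drop_suffix (z.length - p.length)
    rwa [hw.eq_of_rightSpecial (hzrs.of_suffix hs) hp (by simp only [List.length_drop]; omega)]
      at hs
  have hzc := h.append_singleton ((List.prefix_append z [a]).trans hza) (by simp; omega) hpz
    (List.suffix_append_self_iff.2 hpz')
  obtain ⟨ρ, rfl, hρ⟩ := exists_eq_cons_of_reverse_eq (by rintro rfl; simp at hpzlen)
    (ih _ _ (by simp; omega) (hw.isFactorInf_append_singleton hzrs c) hu hzc)
  have hρlen : ρ.length + 1 ≤ v.length := hzlen
  have hρv : IsCompleteFirstReturn v ρ := by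
    refine h.trim_of_isPrefix_cons hpz (List.suffix_append_self_iff.2 ?_) ?_ ?_ (by omega)
      fun e f hef => hw.eq_or_eq_of_rightSpecial_cons hρ hzrs (hv.of_infix hef)
    · exact List.suffix_of_suffix_length_le hpz' (List.suffix_cons c ρ) (by simpa using hpzlen)
    · have h₁ : ρ <+: v ++ [c] := by simpa using (List.prefix_append _ [a]).trans hza
      exact List.prefix_of_prefix_length_le h₁ (List.prefix_append v [c]) (by omega)
    · have h₁ : (ρ ++ [c]).reverse <+: ([c] ++ v ++ [c]).reverse := by
        simpa [hρ] using (List.prefix_append _ [b]).trans hzb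
      exact List.suffix_of_suffix_length_le
        (List.suffix_append_self_iff.1 (List.reverse_prefix.1 h₁)) (List.suffix_append [c] v)
        (by omega)
  have hvpal := ih ρ v (by simp) (hv.of_infix (List.infix_append [c] v [c])) hρ hρv
  exact hne (by simp [hvpal])

theorem reverse_eq_of_isCompleteFirstReturn_of_not_rightSpecial
    (ih : ∀ u' v' : List A, v'.length < v.length → IsFactorInf w v' → u'.reverse = u' →
      IsCompleteFirstReturn v' u' → v'.reverse = v')
    (hv : IsFactorInf w v) (hq : q.reverse = q) (hqrs : ¬ RightSpecial w q)
    (h : IsCompleteFirstReturn v ([c] ++ q ++ [c])) : v.reverse = v := by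
  obtain ⟨hlt, hpre, hsuf, -⟩ := isCompleteFirstReturn_iff.1 h
  obtain ⟨v, rfl⟩ := exists_eq_append_of_prefix_of_suffix
    ((List.prefix_append _ _).trans hpre) ((List.suffix_append _ [c]).trans hsuf)
    (by simp at hlt ⊢; omega)
  have hqc : IsFactorInf w (q ++ [c]) :=
    hv.of_suffix ((List.suffix_append [c] (q ++ [c])).trans (by simpa using hsuf))
  have hqv := h.trim fun e f hef =>
    hw.eq_and_eq_of_not_rightSpecial hq hqrs hqc (hv.of_infix hef)
  have hvpal := ih q v (by simp) (hv.of_infix (List.infix_append [c] v [c])) hq hqv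
  simp [hvpal]

theorem reverse_eq_of_isCompleteFirstReturn (hv : IsFactorInf w v) (hu : u.reverse = u)
    (h : IsCompleteFirstReturn v u) : v.reverse = v := by
  induction hn : v.length using Nat.strong_induction_on generalizing u v with
  | _ n ih =>
  subst hn
  replace ih : ∀ u' v' : List A, v'.length < v.length → IsFactorInf w v' → u'.reverse = u' →
      IsCompleteFirstReturn v' u' → v'.reverse = v' :=
    fun u' v' hlt hv' hu' h' => ih _ hlt hv' hu' h' rfl
  cases List.Palindrome.of_reverse_eq hu with
  | nil =>
    obtain ⟨hlt, -, -, hocc⟩ := isCompleteFirstReturn_iff.1 h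
    have h1 : v.length = 1 := by
      by_contra hne
      have := hocc 1 (occursAt_iff.2 ⟨by simp at hlt ⊢; omega, by simp⟩)
      simp at this hlt
      omega
    obtain ⟨a, rfl⟩ := List.length_eq_one_iff.1 h1
    rfl
  | singleton c =>
    exact hw.reverse_eq_of_isCompleteFirstReturn_of_rightSpecial ih hv (p := []) rfl
      hw.rightSpecial_nil h
  | @cons_concat c q hq =>
    by_cases hqrs : RightSpecial w q
    · obtain ⟨c', hc'⟩ := hw.exists_cons_rightSpecial hqrs
      obtain rfl : c = c' := or_self_iff.1
        (hw.eq_or_eq_of_rightSpecial_cons hq.reverse_eq hc' (hv.of_prefix h.1))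
      exact hw.reverse_eq_of_isCompleteFirstReturn_of_rightSpecial ih hv (p := c :: q) hu hc' h
    · exact hw.reverse_eq_of_isCompleteFirstReturn_of_not_rightSpecial ih hv hq.reverse_eq hqrs h

theorem reverse_eq_of_privileged (hu : Privileged u) (hf : IsFactorInf w u) : u.reverse = u := by
  induction hu with
  | nil => rfl
  | single a => rfl
  | ret v u _ _ _ h ih =>
    exact hw.reverse_eq_of_isCompleteFirstReturn hf (ih (hf.of_prefix h.1)) h

theorem privileged_of_reverse_eq (hf : IsFactorInf w u) (hu : u.reverse = u) : Privileged u := by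
  induction hn : u.length using Nat.strong_induction_on generalizing u with
  | _ n ih =>
  subst hn
  rcases Nat.lt_or_ge u.length 2 with hlt | hge
  · match u, hlt with
    | [], _ => exact .nil
    | [a], _ => exact .single a
  obtain ⟨q, hqu, hq, hqlt, hmax⟩ :=
    exists_longest_palindromic_prefix (u := u) (by rintro rfl; simp at hge)
  have hqs : q <:+ u := by
    rw [← hu, ← hq]
    exact List.reverse_suffix.2 hqu
  obtain ⟨r, hru, hr⟩ := exists_isCompleteFirstReturn_prefix hqu hqs hqlt
  have hrpal := hw.reverse_eq_of_isCompleteFirstReturn (hf.of_prefix hru) hq hr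
  obtain rfl : r = u := hru.eq_of_length <| by
    by_contra hne
    have := hmax r hru hrpal (lt_of_le_of_ne hru.length_le hne)
    have := hr.length_lt
    omega
  exact .ret r q hge hqlt (ih _ hqlt (hf.of_prefix hqu) hq rfl) hr

theorem privComplexityInf_eq_palComplexityInf (n : ℕ) :
    privComplexityInf w n = palComplexityInf w n := by
  simp only [privComplexityInf, palComplexityInf]
  congr 1
  ext u
  exact and_congr_right fun hf => and_congr_left'
    ⟨fun h => hw.reverse_eq_of_privileged h hf, hw.privileged_of_reverse_eq hf⟩

theorem palComplexityInf_one [Fintype A] : palComplexityInf w 1 = Fintype.card A := by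
  have : {u : List A | IsFactorInf w u ∧ u.reverse = u ∧ u.length = 1} = Set.range ([·]) := by
    ext u
    simp only [Set.mem_ofPred_eq, Set.mem_range, List.length_eq_one_iff]
    constructor
    · rintro ⟨-, -, a, rfl⟩
      exact ⟨a, rfl⟩
    · rintro ⟨a, rfl⟩
      exact ⟨hw.isFactorInf_singleton a, rfl, a, rfl⟩
  rw [palComplexityInf, this, Set.ncard_range_of_injective List.singleton_injective,
    Nat.card_eq_fintype_card]

theorem palComplexityInf_add_two (n : ℕ) : palComplexityInf w (n + 2) = palComplexityInf w n := by
  refine Set.ncard_congr (fun u _ => u.tail.dropLast) ?_ ?_ ?_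
  · rintro u ⟨hf, hu, hlen⟩
    obtain ⟨c, m, rfl, hm⟩ := exists_eq_append_of_reverse_eq hu (by omega)
    simp only [List.length_append, List.length_singleton] at hlen
    simpa [hm] using ⟨hf.of_infix (List.infix_append [c] m [c]), by omega⟩
  · rintro u v ⟨hfu, hu, hulen⟩ ⟨hfv, hv, hvlen⟩ huv
    obtain ⟨c, m, rfl, hm⟩ := exists_eq_append_of_reverse_eq hu (by omega)
    obtain ⟨d, m', rfl, -⟩ := exists_eq_append_of_reverse_eq hv (by omega)
    obtain rfl : m = m' := by simpa using huv
    rw [hw.palindromic_extension_unique hm hfu hfv]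
  · rintro m ⟨hf, hm, rfl⟩
    obtain ⟨a, ha⟩ := hw.exists_palindromic_extension hm hf
    exact ⟨[a] ++ m ++ [a], ⟨ha, by simp [hm], by simp⟩, by simp⟩

theorem palComplexityInf_eq [Fintype A] (n : ℕ) :
    palComplexityInf w n = if Even n then 1 else Fintype.card A := by
  induction n using Nat.twoStepInduction with
  | zero => simp [palComplexityInf_zero]
  | one => simp [hw.palComplexityInf_one]
  | more n ih _ => simp [hw.palComplexityInf_add_two, ih, Nat.even_add_one]

end IsStrictEpisturmian

theorem strict_episturmian_privileged_complexity_general {A : Type*} [Fintype A]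
    (w : ℕ → A)
    (hrev : ∀ u : List A, IsFactorInf w u → IsFactorInf w u.reverse)
    (hstrict : ∀ n : ℕ, ∃ u : List A, u.length = n ∧ RightSpecial w u ∧
      (∀ v : List A, v.length = n → RightSpecial w v → v = u) ∧
      ∀ a : A, IsFactorInf w (u ++ [a])) :
    ∀ n : ℕ, privComplexityInf w n = if Even n then 1 else Fintype.card A := by
  have hw : IsStrictEpisturmian w := ⟨hrev, hstrict⟩
  intro n
  rw [hw.privComplexityInf_eq_palComplexityInf, hw.palComplexityInf_eq]

/-- An `A`-strict episturmian word over a finite alphabet `A` with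
`|A| ≥ 2` has privileged complexity 1 for even lengths and `|A|` for odd lengths. -/
theorem strict_episturmian_privileged_complexity {A : Type*} [Fintype A]
    (hA : 2 ≤ Fintype.card A) (w : ℕ → A)
    (hrev : ∀ u : List A, IsFactorInf w u → IsFactorInf w u.reverse)
    (hstrict : ∀ n : ℕ, ∃ u : List A, u.length = n ∧ RightSpecial w u ∧
      (∀ v : List A, v.length = n → RightSpecial w v → v = u) ∧
      ∀ a : A, IsFactorInf w (u ++ [a])) :
    ∀ n : ℕ, privComplexityInf w n = if Even n then 1 else Fintype.card A :=
  strict_episturmian_privileged_complexity_general w hrev hstrict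
end

section
/- Let w be a nonempty privileged factor of the Thue-Morse word t of even length. Then 00 or 11 is a factor of w. -/
/-!
A privileged word of length at least two is a complete first return to a nonempty word, so it
begins and ends with the same letter. A binary word avoiding `00` and `11` alternates, so if its
length is even its first and last letters differ.
-/

theorem occCount_nil {A : Type*} (w : List A) : occCount [] w = w.length + 1 := by
  have : {i : ℕ | i ≤ w.length} = ↑(Finset.Iic w.length) := by ext; simp
  simp [occCount, this]

/-- Letters are complete first returns to the empty word, hence the length bound. -/
theorem IsCompleteFirstReturn.ne_nil {A : Type*} {v u : List A} (h : IsCompleteFirstReturn v u)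
    (hv : 2 ≤ v.length) : u ≠ [] := by
  rintro rfl
  have := h.2.2
  rw [occCount_nil] at this
  omega

theorem Privileged.head?_eq_getLast? {A : Type*} {w : List A} (h : Privileged w) :
    w.head? = w.getLast? := by
  induction h with
  | nil | single => rfl
  | ret w u hw _ _ hret ih =>
    have hu := hret.ne_nil hw
    obtain ⟨⟨t, ht⟩, ⟨s, hs⟩, -⟩ := hret
    rw [← ht, List.head?_append_of_ne_nil _ hu, ih, ht, ← hs,
      List.getLast?_append_of_ne_nil _ hu]

theorem List.isChain_ne_of_forall_not_infix {α : Type*} {l : List α}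
    (h : ∀ a, ¬[a, a] <:+: l) : l.IsChain (· ≠ ·) := by
  refine List.isChain_iff_forall_rel_of_append_cons_cons.mpr fun a b l₁ l₂ hl hab => ?_
  subst hab hl
  exact h a ⟨l₁, l₂, by simp⟩

theorem List.IsChain.getLast_cons_bool {b : Bool} {l : List Bool}
    (h : (b :: l).IsChain (· ≠ ·)) :
    (b :: l).getLast (List.cons_ne_nil b l) = (b ^^ decide (Odd l.length)) := by
  induction l generalizing b with
  | nil => simp
  | cons c l ih =>
    rw [List.isChain_cons_cons] at h
    rw [List.getLast_cons_cons, ih h.2]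
    cases b <;> cases c <;> simp_all [Nat.odd_add_one, ← Nat.not_even_iff_odd]

theorem List.IsChain.head?_ne_getLast?_of_even {l : List Bool} (h : l.IsChain (· ≠ ·))
    (hl : Even l.length) (hne : l ≠ []) : l.head? ≠ l.getLast? := by
  obtain ⟨b, l, rfl⟩ := List.exists_cons_of_ne_nil hne
  have hodd : Odd l.length := by simpa [Nat.even_add_one] using hl
  simp [List.getLast?_eq_some_getLast, h.getLast_cons_bool, hodd]

theorem thue_morse_even_privileged_contains_square_general (w : List Bool) (hne : w ≠ [])
    (hpriv : Privileged w) (heven : Even w.length) :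
    [false, false] <:+: w ∨ [true, true] <:+: w := by
  by_contra! h
  have hchain : w.IsChain (· ≠ ·) :=
    List.isChain_ne_of_forall_not_infix (by rintro (_ | _) <;> tauto)
  exact hchain.head?_ne_getLast?_of_even heven hne hpriv.head?_eq_getLast?

/-- Every nonempty privileged factor of the Thue-Morse word of even length
contains `00` or `11` as a factor. -/
theorem thue_morse_even_privileged_contains_square (w : List Bool) (hne : w ≠ [])
    (hfac : IsFactorInf thueMorse w) (hpriv : Privileged w) (heven : Even w.length) :
    [false, false] <:+: w ∨ [true, true] <:+: w :=
  thue_morse_even_privileged_contains_square_general w hne hpriv heven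
end
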